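/- arXiv:math-ph/0211042 — 4 statements merged into one kernel-verified Lean document; each statement's English description precedes it below -/
import Mathlib

section
/- Let A be an n×n Hermitian matrix and let x be a vector with x†x = 1. Set Π = I - x x† and M = Π A Π. Then det(M - λI) = -λ · det(A - λI) · Tr((A - λI)^{-1} x x†) for all λ not an eigenvalue of A. -/
/-!
With `P = x x†`, `Π = 1 - P` and `B = A - λ`, one has `Π A Π - λ = Π B Π - λ P`. Since `P` is
idempotent, for every scalar `μ`
`Π B Π + μ P = (Π + μ P) (P + B Π) (1 - P B Π)`,
and `P + B Π = B (1 + (B⁻¹ x - x) x†)`. Every factor other than `B` is the identity plus a rank-one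
matrix, so the matrix determinant lemma gives the determinants `μ`, `det B · x† B⁻¹ x` and `1`
(the last because `Π x = 0`).
-/

open Matrix

theorem IsIdempotentElem.one_sub_mul_mul_one_sub_add_mul_eq {A : Type*} [Ring A] {p : A}
    (hp : IsIdempotentElem p) (b m : A) :
    (1 - p) * b * (1 - p) + m * p =
      (1 - p + m * p) * (p + b * (1 - p)) * (1 - p * b * (1 - p)) := by
  have hp₁ : p * (1 - p) = 0 := by rw [mul_sub, mul_one, hp.eq, sub_self]
  have hp₂ : (1 - p) * p = 0 := by rw [sub_mul, one_mul, hp.eq, sub_self]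
  have hright : (p + b * (1 - p)) * (1 - p * b * (1 - p)) = p + (1 - p) * b * (1 - p) :=
    calc _ = p + b * (1 - p) - p * p * b * (1 - p) - b * ((1 - p) * p) * b * (1 - p) := by
          noncomm_ring
      _ = _ := by rw [hp.eq, hp₂]; noncomm_ring
  rw [mul_assoc _ (p + _), hright]
  calc _ = (1 - p) * p + (1 - p) * (1 - p) * b * (1 - p) + m * (p * p)
          + m * (p * (1 - p)) * b * (1 - p) := by
        rw [hp₂, hp₁, hp.one_sub.eq, hp.eq]; noncomm_ring
    _ = _ := by noncomm_ring

namespace Matrix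

variable {n R : Type*} [Fintype n] [CommRing R]

theorem isIdempotentElem_vecMulVec {x y : n → R} (hyx : y ⬝ᵥ x = 1) :
    IsIdempotentElem (vecMulVec x y) := by
  rw [IsIdempotentElem, vecMulVec_mul_vecMulVec, hyx, one_smul]

variable [DecidableEq n]

theorem det_one_add_vecMulVec (u v : n → R) : (1 + vecMulVec u v).det = 1 + v ⬝ᵥ u := by
  rw [vecMulVec_eq Unit, det_one_add_replicateCol_mul_replicateRow]

theorem det_one_sub_add_smul_vecMulVec {x y : n → R} (hyx : y ⬝ᵥ x = 1) (μ : R) :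
    (1 - vecMulVec x y + μ • vecMulVec x y).det = μ := by
  have hrank_one : 1 - vecMulVec x y + μ • vecMulVec x y = 1 + vecMulVec ((μ - 1) • x) y := by
    rw [smul_vecMulVec, sub_smul, one_smul]
    abel
  rw [hrank_one, det_one_add_vecMulVec, dotProduct_smul, hyx, smul_eq_mul, mul_one,
    add_sub_cancel]

theorem det_vecMulVec_add_mul_one_sub {x y : n → R} (hyx : y ⬝ᵥ x = 1) {B : Matrix n n R}
    (hB : IsUnit B.det) :
    (vecMulVec x y + B * (1 - vecMulVec x y)).det = B.det * (y ⬝ᵥ B⁻¹ *ᵥ x) := by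
  have hfactor :
      vecMulVec x y + B * (1 - vecMulVec x y) = B * (1 + vecMulVec (B⁻¹ *ᵥ x - x) y) := by
    rw [mul_add, mul_one, mul_sub, mul_one, mul_vecMulVec, mul_vecMulVec, mulVec_sub,
      mulVec_mulVec, mul_nonsing_inv _ hB, one_mulVec, sub_vecMulVec]
    abel
  rw [hfactor, det_mul, det_one_add_vecMulVec, dotProduct_sub, hyx, add_sub_cancel]

theorem det_one_sub_vecMulVec_mul_mul_one_sub {x y : n → R} (hyx : y ⬝ᵥ x = 1)
    (B : Matrix n n R) : (1 - vecMulVec x y * B * (1 - vecMulVec x y)).det = 1 := by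
  have hx : (1 - vecMulVec x y) *ᵥ x = 0 := by
    rw [sub_mulVec, one_mulVec, vecMulVec_mulVec, hyx]
    simp
  rw [Matrix.mul_assoc, vecMulVec_mul, sub_eq_add_neg, ← vecMulVec_neg, det_one_add_vecMulVec,
    neg_dotProduct, ← vecMul_vecMul, ← dotProduct_mulVec, hx, dotProduct_zero, neg_zero, add_zero]

theorem det_one_sub_mul_mul_one_sub_add_smul_vecMulVec {x y : n → R} (hyx : y ⬝ᵥ x = 1)
    {B : Matrix n n R} (hB : IsUnit B.det) (μ : R) :
    ((1 - vecMulVec x y) * B * (1 - vecMulVec x y) + μ • vecMulVec x y).det =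
      μ * B.det * (y ⬝ᵥ B⁻¹ *ᵥ x) := by
  rw [← smul_one_mul, (isIdempotentElem_vecMulVec hyx).one_sub_mul_mul_one_sub_add_mul_eq,
    smul_one_mul, det_mul, det_mul, det_one_sub_add_smul_vecMulVec hyx,
    det_vecMulVec_add_mul_one_sub hyx hB, det_one_sub_vecMulVec_mul_mul_one_sub hyx, mul_one,
    mul_assoc]

end Matrix

theorem stmt0_general {n : ℕ} (A : Matrix (Fin n) (Fin n) ℂ)
    (x : Fin n → ℂ) (hx : star x ⬝ᵥ x = 1) (lam : ℂ)
    (hlam : (A - lam • (1 : Matrix (Fin n) (Fin n) ℂ)).det ≠ 0) :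
    ((((1 : Matrix (Fin n) (Fin n) ℂ) - vecMulVec x (star x)) * A *
        ((1 : Matrix (Fin n) (Fin n) ℂ) - vecMulVec x (star x))) -
        lam • (1 : Matrix (Fin n) (Fin n) ℂ)).det =
      -lam * (A - lam • (1 : Matrix (Fin n) (Fin n) ℂ)).det *
        ((A - lam • (1 : Matrix (Fin n) (Fin n) ℂ))⁻¹ * vecMulVec x (star x)).trace := by
  set B := A - lam • (1 : Matrix (Fin n) (Fin n) ℂ)
  set P := vecMulVec x (star x)
  have hcompl : IsIdempotentElem (1 - P) := (isIdempotentElem_vecMulVec hx).one_sub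
  have hshift : (1 - P) * A * (1 - P) - lam • 1 = (1 - P) * B * (1 - P) + (-lam) • P := by
    rw [show A = B + lam • 1 by simp [B], mul_add, add_mul, mul_smul_comm, mul_one, smul_mul_assoc,
      hcompl.eq]
    module
  have htrace : (B⁻¹ * P).trace = star x ⬝ᵥ B⁻¹ *ᵥ x := by
    rw [mul_vecMulVec, trace_vecMulVec, dotProduct_comm]
  rw [hshift, htrace,
    det_one_sub_mul_mul_one_sub_add_smul_vecMulVec hx (isUnit_iff_ne_zero.mpr hlam)]

/-- Let `A` be an `n×n` Hermitian matrix and `x` a vector with `x† x = 1`.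
Set `Π = 1 - x x†` and `M = Π A Π`.  Then for every `λ` that is not an
eigenvalue of `A` (i.e. `det (A - λ 1) ≠ 0`),
`det (M - λ 1) = -λ · det (A - λ 1) · Tr ((A - λ 1)⁻¹ x x†)`. -/
theorem stmt0 {n : ℕ} (A : Matrix (Fin n) (Fin n) ℂ) (hA : A.IsHermitian)
    (x : Fin n → ℂ) (hx : star x ⬝ᵥ x = 1) (lam : ℂ)
    (hlam : (A - lam • (1 : Matrix (Fin n) (Fin n) ℂ)).det ≠ 0) :
    ((((1 : Matrix (Fin n) (Fin n) ℂ) - vecMulVec x (star x)) * A *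
        ((1 : Matrix (Fin n) (Fin n) ℂ) - vecMulVec x (star x))) -
        lam • (1 : Matrix (Fin n) (Fin n) ℂ)).det =
      -lam * (A - lam • (1 : Matrix (Fin n) (Fin n) ℂ)).det *
        ((A - lam • (1 : Matrix (Fin n) (Fin n) ℂ))⁻¹ * vecMulVec x (star x)).trace :=
  stmt0_general A x hx lam hlam
end

section
/- Let a_1 > a_2 > ⋯ > a_n be real numbers and w_1, …, w_n be strictly positive reals. Then the rational function R(λ) = Σ_{i=1}^n w_i/(a_i - λ) has exactly n-1 real zeros λ_1 > λ_2 > ⋯ > λ_{n-1}, and these interlace strictly with the a_i: a_1 > λ_1 > a_2 > λ_2 > ⋯ > λ_{n-1} > a_n. -/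
/-!
On each gap `(a (i+1), a i)` between consecutive poles every term `w j / (a j - λ)` is
increasing, so `R = secular a w` is strictly increasing there; it tends to `-∞` at the left end
and to `+∞` at the right end, hence has exactly one zero in each of the `n - 1` gaps. Outside
`[a_n, a_1]` all terms have the same sign, so there are no other zeros.
-/

open Filter Set Finset Topology

theorem exists_apply_succ_le_and_lt_apply_castSucc {α : Type*} [LinearOrder α] {x : α} :
    ∀ {n : ℕ} (a : Fin (n + 1) → α), x < a 0 → a (Fin.last n) ≤ x →
      ∃ i : Fin n, a i.succ ≤ x ∧ x < a i.castSucc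
  | 0, _, h0, hlast => absurd h0 (not_lt.2 hlast)
  | n + 1, a, h0, hlast => by
    by_cases h1 : a 1 ≤ x
    · exact ⟨0, h1, h0⟩
    · obtain ⟨i, hi⟩ :=
        exists_apply_succ_le_and_lt_apply_castSucc (a ∘ Fin.succ) (not_le.1 h1) hlast
      exact ⟨i.succ, hi⟩

theorem Antitone.apply_notMem_Ioo_succ_castSucc {α : Type*} [Preorder α] {n : ℕ}
    {a : Fin (n + 1) → α} (ha : Antitone a) (i : Fin n) (j : Fin (n + 1)) :
    a j ∉ Ioo (a i.succ) (a i.castSucc) := by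
  rintro ⟨hlo, hhi⟩
  rcases le_or_gt j i.castSucc with h | h
  · exact (ha h).not_gt hhi
  · exact (ha (Fin.castSucc_lt_iff_succ_le.1 h)).not_gt hlo

theorem div_sub_lt_div_sub {w c x y : ℝ} (hw : 0 < w) (hxy : x < y) (hc : c ∉ Icc x y) :
    w / (c - x) < w / (c - y) := by
  suffices h : 1 / (c - x) < 1 / (c - y) by
    simpa only [mul_one_div] using mul_lt_mul_of_pos_left h hw
  rcases lt_or_ge c x with hcx | hxc
  · exact one_div_lt_one_div_of_neg_of_lt (by linarith) (by linarith)
  · have hyc : y < c := not_le.1 fun hcy => hc ⟨hxc, hcy⟩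
    exact one_div_lt_one_div_of_lt (by linarith) (by linarith)

theorem tendsto_div_const_sub_nhdsLT {w : ℝ} (hw : 0 < w) (c : ℝ) :
    Tendsto (fun x => w / (c - x)) (𝓝[<] c) atTop := by
  have hsub : Tendsto (fun x => c - x) (𝓝[<] c) (𝓝[>] 0) :=
    tendsto_nhdsWithin_iff.2
      ⟨by simpa using ((continuous_sub_left c).tendsto c).mono_left nhdsWithin_le_nhds,
        eventually_nhdsWithin_of_forall fun _ hx => sub_pos.2 (mem_Iio.1 hx)⟩
  simpa only [div_eq_mul_inv, Pi.inv_apply] using hsub.inv_tendsto_nhdsGT_zero.const_mul_atTop hw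

theorem tendsto_div_const_sub_nhdsGT {w : ℝ} (hw : 0 < w) (c : ℝ) :
    Tendsto (fun x => w / (c - x)) (𝓝[>] c) atBot := by
  have hsub : Tendsto (fun x => c - x) (𝓝[>] c) (𝓝[<] 0) :=
    tendsto_nhdsWithin_iff.2
      ⟨by simpa using ((continuous_sub_left c).tendsto c).mono_left nhdsWithin_le_nhds,
        eventually_nhdsWithin_of_forall fun _ hx => sub_neg.2 (mem_Ioi.1 hx)⟩
  simpa only [div_eq_mul_inv, Pi.inv_apply] using hsub.inv_tendsto_nhdsLT_zero.const_mul_atBot hw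

theorem exists_mem_Ioo_eq_zero_of_tendsto {f : ℝ → ℝ} {p q : ℝ} (hpq : p < q)
    (hf : ContinuousOn f (Ioo p q)) (hp : Tendsto f (𝓝[>] p) atBot)
    (hq : Tendsto f (𝓝[<] q) atTop) : ∃ x ∈ Ioo p q, f x = 0 := by
  obtain ⟨x₀, hneg, hx₀⟩ := ((hp.eventually_lt_atBot 0).and (Ioo_mem_nhdsGT hpq)).exists
  obtain ⟨x₁, hpos, hx₁⟩ := ((hq.eventually_gt_atTop 0).and (Ioo_mem_nhdsLT hpq)).exists
  exact isPreconnected_Ioo.intermediate_value hx₀ hx₁ hf ⟨hneg.le, hpos.le⟩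

theorem continuousAt_sum_div_sub {ι : Type*} {a w : ι → ℝ} (s : Finset ι) {x₀ : ℝ}
    (h : ∀ j ∈ s, a j ≠ x₀) :
    ContinuousAt (fun x => ∑ j ∈ s, w j / (a j - x)) x₀ :=
  tendsto_finsetSum s fun j hj =>
    continuousAt_const.div (continuousAt_const.sub continuousAt_id) (sub_ne_zero.2 (h j hj))

noncomputable def secular {ι : Type*} [Fintype ι] (a w : ι → ℝ) (x : ℝ) : ℝ :=
  ∑ j, w j / (a j - x)

section Secular

variable {ι : Type*} [Fintype ι] {a w : ι → ℝ}

theorem continuousOn_secular {s : Set ℝ} (h : ∀ j, a j ∉ s) : ContinuousOn (secular a w) s :=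
  fun x hx => (continuousAt_sum_div_sub univ fun j _ hj => h j (by rwa [hj])).continuousWithinAt

theorem secular_pos (hw : ∀ j, 0 < w j) [Nonempty ι] {x : ℝ} (h : ∀ j, x < a j) :
    0 < secular a w x :=
  sum_pos (fun j _ => div_pos (hw j) (sub_pos.2 (h j))) univ_nonempty

theorem secular_neg (hw : ∀ j, 0 < w j) [Nonempty ι] {x : ℝ} (h : ∀ j, a j < x) :
    secular a w x < 0 :=
  sum_neg (fun j _ => div_neg_of_pos_of_neg (hw j) (sub_neg.2 (h j))) univ_nonempty

theorem secular_strictMonoOn (hw : ∀ j, 0 < w j) [Nonempty ι] {s : Set ℝ} (hs : s.OrdConnected)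
    (h : ∀ j, a j ∉ s) : StrictMonoOn (secular a w) s := fun _ hx _ hy hxy =>
  sum_lt_sum_of_nonempty univ_nonempty fun j _ =>
    div_sub_lt_div_sub (hw j) hxy fun hj => h j (hs.out hx hy hj)

theorem tendsto_secular_nhdsLT (ha : Function.Injective a) {k : ι} (hk : 0 < w k) :
    Tendsto (secular a w) (𝓝[<] (a k)) atTop := by
  classical
  have hrest : ContinuousAt (fun x => ∑ j ∈ univ.erase k, w j / (a j - x)) (a k) :=
    continuousAt_sum_div_sub _ fun j hj => ha.ne (ne_of_mem_erase hj)
  exact ((tendsto_div_const_sub_nhdsLT hk _).atTop_add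
    (hrest.tendsto.mono_left nhdsWithin_le_nhds)).congr fun x =>
      add_sum_erase univ (fun j => w j / (a j - x)) (mem_univ k)

theorem tendsto_secular_nhdsGT (ha : Function.Injective a) {k : ι} (hk : 0 < w k) :
    Tendsto (secular a w) (𝓝[>] (a k)) atBot := by
  classical
  have hrest : ContinuousAt (fun x => ∑ j ∈ univ.erase k, w j / (a j - x)) (a k) :=
    continuousAt_sum_div_sub _ fun j hj => ha.ne (ne_of_mem_erase hj)
  exact ((tendsto_div_const_sub_nhdsGT hk _).atBot_add
    (hrest.tendsto.mono_left nhdsWithin_le_nhds)).congr fun x =>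
      add_sum_erase univ (fun j => w j / (a j - x)) (mem_univ k)

end Secular

theorem exists_secular_eq_zero_mem_Ioo {n : ℕ} {a w : Fin (n + 1) → ℝ} (ha : StrictAnti a)
    (hw : ∀ j, 0 < w j) (i : Fin n) :
    ∃ x ∈ Ioo (a i.succ) (a i.castSucc), secular a w x = 0 :=
  exists_mem_Ioo_eq_zero_of_tendsto (ha Fin.castSucc_lt_succ)
    (continuousOn_secular (ha.antitone.apply_notMem_Ioo_succ_castSucc i))
    (tendsto_secular_nhdsGT ha.injective (hw _)) (tendsto_secular_nhdsLT ha.injective (hw _))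

/-- For `a_1 > a_2 > ⋯ > a_n` real and `w_i > 0`, the rational function
`R(λ) = Σ_i w_i / (a_i - λ)` has exactly `n - 1` real zeros, and they strictly
interlace with the `a_i`:  `a_1 > λ_1 > a_2 > λ_2 > ⋯ > λ_{n-1} > a_n`. -/
theorem stmt2 {n : ℕ} (a : Fin (n + 1) → ℝ) (w : Fin (n + 1) → ℝ)
    (ha : StrictAnti a) (hw : ∀ i, 0 < w i) :
    ∃ l : Fin n → ℝ, StrictAnti l ∧
      (∀ i : Fin n, l i < a i.castSucc ∧ a i.succ < l i) ∧
      (∀ i : Fin n, ∑ j, w j / (a j - l i) = 0) ∧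
      (∀ x : ℝ, (∀ j, x ≠ a j) → ∑ j, w j / (a j - x) = 0 → ∃ i, x = l i) := by
  choose l hl hzero using exists_secular_eq_zero_mem_Ioo ha hw
  refine ⟨l, fun i i' hii' => ?_, fun i => ⟨(hl i).2, (hl i).1⟩, hzero, fun x hx hx0 => ?_⟩
  · calc l i' < a i'.castSucc := (hl i').2
      _ ≤ a i.succ := ha.antitone (Fin.succ_le_castSucc_iff.2 hii')
      _ < l i := (hl i).1
  · have hx_lt : x < a 0 := by
      by_contra! h
      exact (secular_neg hw fun j => (ha.antitone (Fin.zero_le j)).trans_lt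
        ((hx 0).symm.lt_of_le h)).ne hx0
    have hx_gt : a (Fin.last n) < x := by
      by_contra! h
      exact (secular_pos hw fun j => ((hx _).lt_of_le h).trans_le
        (ha.antitone (Fin.le_last j))).ne' hx0
    obtain ⟨i, hi_le, hi_lt⟩ := exists_apply_succ_le_and_lt_apply_castSucc a hx_lt hx_gt.le
    have hmono := secular_strictMonoOn hw ordConnected_Ioo
      (ha.antitone.apply_notMem_Ioo_succ_castSucc i)
    exact ⟨i, hmono.injOn ⟨hi_le.lt_of_ne (hx _).symm, hi_lt⟩ (hl i)
      (hx0.trans (hzero i).symm)⟩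
end

section
/- Let a_1 > a_2 > ⋯ > a_n be real numbers and w_1, …, w_n strictly positive reals. Then the rational function R(λ) = λ + Σ_{j=1}^n w_j/(a_j - λ) has exactly n+1 real zeros λ_1 > a_1 > λ_2 > a_2 > ⋯ > a_n > λ_{n+1}, and moreover Σ_{l=1}^{n+1} λ_l = Σ_{l=1}^n a_l. -/
/-!
The poles `a j` cut the line into `n + 1` open intervals. On each of them `R` is continuous and
runs from `-∞` (as `λ → a_j⁺`, because `w_j > 0`, or as `λ → -∞`) to `+∞` (as `λ → a_j⁻` or
`λ → +∞`), so it has a zero there by the intermediate value theorem. These `n + 1` distinct zeros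
are roots of the monic numerator `λ ∏ (λ - a_j) - ∑ w_j ∏_{k ≠ j} (λ - a_k)` of degree `n + 1`,
hence they are all of its roots: every zero of `R` is one of them, and comparing the coefficients
of `λ ^ n` gives `∑ λ_l = ∑ a_j`.
-/

open Filter Topology Polynomial Finset Lagrange Bornology Function

noncomputable def secularFunction {ι : Type*} [Fintype ι] (a w : ι → ℝ) (x : ℝ) : ℝ :=
  x + ∑ j, w j / (a j - x)

section SecularFunction

variable {ι : Type*} [Fintype ι] {a w : ι → ℝ}

theorem continuousAt_secularFunction {x : ℝ} (hx : ∀ j, x ≠ a j) :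
    ContinuousAt (secularFunction a w) x := by
  have := fun j => sub_ne_zero.2 (hx j).symm
  unfold secularFunction
  fun_prop (disch := exact this _)

theorem continuousOn_secularFunction {s : Set ℝ} (hs : ∀ j, a j ∉ s) :
    ContinuousOn (secularFunction a w) s := fun x hx =>
  (continuousAt_secularFunction fun j (h : x = a j) => hs j (h ▸ hx)).continuousWithinAt

theorem tendsto_secularFunction_sub_self_cobounded :
    Tendsto (fun x => secularFunction a w x - x) (cobounded ℝ) (𝓝 0) := by
  have := tendsto_finsetSum univ fun j _ =>
    (tendsto_inv₀_cobounded.comp (tendsto_const_sub_cobounded (a j))).const_mul (w j)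
  simpa [secularFunction, div_eq_mul_inv] using this

theorem tendsto_secularFunction_atTop : Tendsto (secularFunction a w) atTop atTop := by
  simpa using tendsto_id.atTop_add
    (tendsto_secularFunction_sub_self_cobounded.mono_left IsOrderBornology.atTop_le_cobounded)

theorem tendsto_secularFunction_atBot : Tendsto (secularFunction a w) atBot atBot := by
  simpa using tendsto_id.atBot_add
    (tendsto_secularFunction_sub_self_cobounded.mono_left IsOrderBornology.atBot_le_cobounded)

theorem secularFunction_eq_add_div [DecidableEq ι] (i : ι) (x : ℝ) :
    secularFunction a w x =
      secularFunction (fun j : {j // j ≠ i} => a j) (fun j => w j) x + w i / (a i - x) := by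
  simp only [secularFunction, Fintype.sum_eq_add_sum_subtype_ne _ i]
  ring

theorem continuousAt_secularFunction_subtype_ne [DecidableEq ι] (ha : Injective a) (i : ι) :
    ContinuousAt (secularFunction (fun j : {j // j ≠ i} => a j) (fun j => w j)) (a i) :=
  continuousAt_secularFunction fun j => ha.ne j.2.symm

theorem tendsto_secularFunction_nhdsGT (ha : Injective a) {i : ι} (hw : 0 < w i) :
    Tendsto (secularFunction a w) (𝓝[>] a i) atBot := by
  classical
  have hsub : Tendsto (a i - ·) (𝓝[>] a i) (𝓝[<] 0) := by
    have := map_subLeft_nhdsGT (c := a i) (a := a i)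
    rw [sub_self] at this
    exact this.le
  have hpole : Tendsto (fun x => w i / (a i - x)) (𝓝[>] a i) atBot := by
    simpa [div_eq_mul_inv] using (tendsto_inv_nhdsLT_zero.comp hsub).const_mul_atBot hw
  rw [funext (secularFunction_eq_add_div i)]
  exact ((continuousAt_secularFunction_subtype_ne (w := w) ha i).tendsto.mono_left
    nhdsWithin_le_nhds).add_atBot hpole

theorem tendsto_secularFunction_nhdsLT (ha : Injective a) {i : ι} (hw : 0 < w i) :
    Tendsto (secularFunction a w) (𝓝[<] a i) atTop := by
  classical
  have hsub : Tendsto (a i - ·) (𝓝[<] a i) (𝓝[>] 0) := by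
    have := map_subLeft_nhdsLT (c := a i) (a := a i)
    rw [sub_self] at this
    exact this.le
  have hpole : Tendsto (fun x => w i / (a i - x)) (𝓝[<] a i) atTop := by
    simpa [div_eq_mul_inv] using (tendsto_inv_nhdsGT_zero.comp hsub).const_mul_atTop hw
  rw [funext (secularFunction_eq_add_div i)]
  exact ((continuousAt_secularFunction_subtype_ne (w := w) ha i).tendsto.mono_left
    nhdsWithin_le_nhds).add_atTop hpole

end SecularFunction

/-- For strictly decreasing `a`, `poleGap a i` is the open interval between consecutive poles
`a i < x < a (i - 1)`, with `a (-1) = +∞` and `a n = -∞`. -/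
def poleGap {n : ℕ} (a : Fin n → ℝ) (i : Fin (n + 1)) : Set ℝ :=
  {x | (∀ j : Fin n, j.castSucc < i → x < a j) ∧ ∀ j : Fin n, i ≤ j.castSucc → a j < x}

section PoleGap

variable {n : ℕ} {a : Fin n → ℝ}

theorem ordConnected_poleGap (i : Fin (n + 1)) : (poleGap a i).OrdConnected :=
  ⟨fun _ hx _ hy _ hz =>
    ⟨fun j hj => hz.2.trans_lt (hy.1 j hj), fun j hj => (hx.2 j hj).trans_le hz.1⟩⟩

theorem pole_notMem_poleGap (i : Fin (n + 1)) (j : Fin n) : a j ∉ poleGap a i := fun h =>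
  (lt_or_ge j.castSucc i).elim (fun hj => lt_irrefl _ (h.1 j hj)) fun hj => lt_irrefl _ (h.2 j hj)

theorem poleGap_castSucc_subset_Ioi (j : Fin n) : poleGap a j.castSucc ⊆ Set.Ioi (a j) :=
  fun _ hx => hx.2 j le_rfl

theorem poleGap_succ_subset_Iio (j : Fin n) : poleGap a j.succ ⊆ Set.Iio (a j) :=
  fun _ hx => hx.1 j j.castSucc_lt_succ

theorem eventually_atBot_mem_poleGap_last : ∀ᶠ x in atBot, x ∈ poleGap a (Fin.last n) := by
  filter_upwards [eventually_all.2 fun j => eventually_lt_atBot (a j)] with x hx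
  exact ⟨fun j _ => hx j, fun j hj => absurd hj (Fin.castSucc_lt_last j).not_ge⟩

theorem eventually_atTop_mem_poleGap_zero : ∀ᶠ x in atTop, x ∈ poleGap a 0 := by
  filter_upwards [eventually_all.2 fun j => eventually_gt_atTop (a j)] with x hx
  exact ⟨fun j hj => absurd hj (Fin.not_lt_zero _), fun j _ => hx j⟩

theorem eventually_nhdsGT_mem_poleGap (ha : StrictAnti a) (i : Fin n) :
    ∀ᶠ x in 𝓝[>] a i, x ∈ poleGap a i.castSucc := by
  have hnear : ∀ᶠ x in 𝓝 (a i), ∀ j, j < i → x < a j :=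
    eventually_all.2 fun j => eventually_imp_distrib_left.2 fun hj => Iio_mem_nhds (ha hj)
  filter_upwards [self_mem_nhdsWithin, nhdsWithin_le_nhds hnear] with x (hx : a i < x) hx'
  exact ⟨fun j hj => hx' j (Fin.castSucc_lt_castSucc_iff.1 hj),
    fun j hj => (ha.antitone (Fin.castSucc_le_castSucc_iff.1 hj)).trans_lt hx⟩

theorem eventually_nhdsLT_mem_poleGap (ha : StrictAnti a) (i : Fin n) :
    ∀ᶠ x in 𝓝[<] a i, x ∈ poleGap a i.succ := by
  have hnear : ∀ᶠ x in 𝓝 (a i), ∀ j, i < j → a j < x :=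
    eventually_all.2 fun j => eventually_imp_distrib_left.2 fun hj => Ioi_mem_nhds (ha hj)
  filter_upwards [self_mem_nhdsWithin, nhdsWithin_le_nhds hnear] with x (hx : x < a i) hx'
  exact ⟨fun j hj => hx.trans_le (ha.antitone (Fin.castSucc_lt_succ_iff.1 hj)),
    fun j hj => hx' j (Fin.succ_le_castSucc_iff.1 hj)⟩

variable {w : Fin n → ℝ}

theorem exists_mem_poleGap_secularFunction_nonpos (ha : StrictAnti a) (hw : ∀ j, 0 < w j)
    (i : Fin (n + 1)) : ∃ x ∈ poleGap a i, secularFunction a w x ≤ 0 := by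
  induction i using Fin.lastCases with
  | last =>
    exact (eventually_atBot_mem_poleGap_last.and
      (tendsto_secularFunction_atBot.eventually_le_atBot 0)).exists
  | cast i =>
    exact ((eventually_nhdsGT_mem_poleGap ha i).and
      ((tendsto_secularFunction_nhdsGT ha.injective (hw i)).eventually_le_atBot 0)).exists

theorem exists_mem_poleGap_secularFunction_nonneg (ha : StrictAnti a) (hw : ∀ j, 0 < w j)
    (i : Fin (n + 1)) : ∃ x ∈ poleGap a i, 0 ≤ secularFunction a w x := by
  induction i using Fin.cases with
  | zero =>
    exact (eventually_atTop_mem_poleGap_zero.and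
      (tendsto_secularFunction_atTop.eventually_ge_atTop 0)).exists
  | succ i =>
    exact ((eventually_nhdsLT_mem_poleGap ha i).and
      ((tendsto_secularFunction_nhdsLT ha.injective (hw i)).eventually_ge_atTop 0)).exists

theorem exists_mem_poleGap_secularFunction_eq_zero (ha : StrictAnti a) (hw : ∀ j, 0 < w j)
    (i : Fin (n + 1)) : ∃ x ∈ poleGap a i, secularFunction a w x = 0 := by
  obtain ⟨x, hx, hx0⟩ := exists_mem_poleGap_secularFunction_nonpos ha hw i
  obtain ⟨y, hy, hy0⟩ := exists_mem_poleGap_secularFunction_nonneg ha hw i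
  exact (ordConnected_poleGap i).isPreconnected.intermediate_value hx hy
    (continuousOn_secularFunction fun j => pole_notMem_poleGap i j) ⟨hx0, hy0⟩

end PoleGap

theorem Polynomial.roots_eq_map_of_injective {R ι : Type*} [CommRing R] [IsDomain R] [Fintype ι]
    {p : R[X]} {l : ι → R} (hp : p ≠ 0) (hdeg : p.natDegree ≤ Fintype.card ι)
    (hl : Injective l) (hroot : ∀ i, p.IsRoot (l i)) : p.roots = univ.val.map l := by
  have hle : univ.val.map l ≤ p.roots :=
    (Multiset.le_iff_subset (univ.nodup.map hl)).2 fun x hx => by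
      obtain ⟨i, -, rfl⟩ := Multiset.mem_map.1 hx
      exact (mem_roots hp).2 (hroot i)
  exact (Multiset.eq_of_le_of_card_le hle (by simpa using p.card_roots'.trans hdeg)).symm

theorem Polynomial.Monic.nextCoeff_eq_neg_sum_of_roots_eq {R ι : Type*} [CommRing R] [IsDomain R]
    [Fintype ι] {p : R[X]} {l : ι → R} (hp : p.Monic) (hdeg : p.natDegree = Fintype.card ι)
    (hroots : p.roots = univ.val.map l) : p.nextCoeff = -∑ i, l i := by
  have hsplits : p.Splits := by
    rw [splits_iff_card_roots, hroots, hdeg]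
    simp
  rw [hsplits.nextCoeff_eq_neg_sum_roots_of_monic hp, hroots]
  rfl

section SecularPolynomial

variable {ι : Type*} [Fintype ι] (a w : ι → ℝ)

theorem degree_X_mul_nodal :
    (X * nodal univ a).degree = ((Fintype.card ι + 1 : ℕ) : WithBot ℕ) := by
  rw [degree_mul, degree_X, degree_nodal, card_univ, add_comm]
  rfl

variable [DecidableEq ι]

/-- `(-1) ^ n` times the paper's numerator `p`, so that it is monic. -/
noncomputable def secularPolynomial : ℝ[X] :=
  X * nodal univ a - ∑ j, C (w j) * nodal (univ.erase j) a

theorem degree_sum_C_mul_nodal_erase_lt :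
    (∑ j, C (w j) * nodal (univ.erase j) a).degree < Fintype.card ι := by
  refine (degree_sum_le _ _).trans_lt ((Finset.sup_lt_iff (WithBot.bot_lt_coe _)).2 fun j _ => ?_)
  rw [← smul_eq_C_mul]
  refine (degree_smul_le _ _).trans_lt ?_
  rw [degree_nodal, card_erase_of_mem (mem_univ j), card_univ]
  exact_mod_cast Nat.sub_lt (Fintype.card_pos_iff.2 ⟨j⟩) one_pos

theorem degree_sum_C_mul_nodal_erase_lt_degree_X_mul_nodal :
    (∑ j, C (w j) * nodal (univ.erase j) a).degree < (X * nodal univ a).degree := by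
  rw [degree_X_mul_nodal]
  exact (degree_sum_C_mul_nodal_erase_lt a w).trans (WithBot.coe_lt_coe.2 (Nat.lt_succ_self _))

theorem degree_secularPolynomial :
    (secularPolynomial a w).degree = ((Fintype.card ι + 1 : ℕ) : WithBot ℕ) := by
  rw [secularPolynomial,
    degree_sub_eq_left_of_degree_lt (degree_sum_C_mul_nodal_erase_lt_degree_X_mul_nodal a w),
    degree_X_mul_nodal]

theorem natDegree_secularPolynomial :
    (secularPolynomial a w).natDegree = Fintype.card ι + 1 :=
  natDegree_eq_of_degree_eq_some (degree_secularPolynomial a w)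

theorem monic_secularPolynomial : (secularPolynomial a w).Monic :=
  (monic_X.mul nodal_monic).sub_of_left (degree_sum_C_mul_nodal_erase_lt_degree_X_mul_nodal a w)

theorem nextCoeff_secularPolynomial : (secularPolynomial a w).nextCoeff = -∑ j, a j := by
  have hXq : (X * nodal univ a).natDegree = Fintype.card ι + 1 :=
    natDegree_eq_of_degree_eq_some (degree_X_mul_nodal a)
  calc (secularPolynomial a w).nextCoeff
      = (secularPolynomial a w).coeff (Fintype.card ι) := by
        rw [nextCoeff_of_natDegree_pos (by simp [natDegree_secularPolynomial]),
          natDegree_secularPolynomial, Nat.add_sub_cancel]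
    _ = (X * nodal univ a).coeff (Fintype.card ι) := by
        rw [secularPolynomial, coeff_sub,
          coeff_eq_zero_of_degree_lt (degree_sum_C_mul_nodal_erase_lt a w), sub_zero]
    _ = (X * nodal univ a).nextCoeff := by
        rw [nextCoeff_of_natDegree_pos (by omega), hXq, Nat.add_sub_cancel]
    _ = -∑ j, a j := by
        rw [monic_X.nextCoeff_mul nodal_monic, nodal, prod_X_sub_C_nextCoeff]
        simp [nextCoeff]

theorem eval_secularPolynomial {x : ℝ} (hx : ∀ j, x ≠ a j) :
    (secularPolynomial a w).eval x = (∏ j, (x - a j)) * secularFunction a w x := by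
  have hterm (j : ι) :
      (∏ k, (x - a k)) * (w j / (a j - x)) = -(w j * ∏ k ∈ univ.erase j, (x - a k)) := by
    rw [← mul_prod_erase _ _ (mem_univ j)]
    have : a j - x ≠ 0 := sub_ne_zero.2 (hx j).symm
    field_simp
    ring
  simp only [secularPolynomial, secularFunction, eval_sub, eval_mul, eval_X, eval_finsetSum,
    eval_C, eval_nodal, mul_add, mul_sum, hterm, sum_neg_distrib]
  ring

theorem isRoot_secularPolynomial_iff {x : ℝ} (hx : ∀ j, x ≠ a j) :
    (secularPolynomial a w).IsRoot x ↔ secularFunction a w x = 0 := by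
  rw [IsRoot, eval_secularPolynomial a w hx,
    mul_eq_zero_iff_left (prod_ne_zero_iff.2 fun j _ => sub_ne_zero.2 (hx j))]

end SecularPolynomial

/-- For `a_1 > ⋯ > a_n` real and `w_j > 0`, the rational function
`R(λ) = λ + Σ_j w_j / (a_j - λ)` has exactly `n + 1` real zeros
`λ_1 > a_1 > λ_2 > a_2 > ⋯ > a_n > λ_{n+1}`, and moreover
`Σ_{l=1}^{n+1} λ_l = Σ_{l=1}^n a_l`. -/
theorem stmt3 {n : ℕ} (a : Fin n → ℝ) (w : Fin n → ℝ)
    (ha : StrictAnti a) (hw : ∀ i, 0 < w i) :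
    ∃ l : Fin (n + 1) → ℝ, StrictAnti l ∧
      (∀ i : Fin n, a i < l i.castSucc ∧ l i.succ < a i) ∧
      (∀ i : Fin (n + 1), (∀ j, l i ≠ a j) ∧ l i + ∑ j, w j / (a j - l i) = 0) ∧
      (∀ x : ℝ, (∀ j, x ≠ a j) → x + ∑ j, w j / (a j - x) = 0 → ∃ i, x = l i) ∧
      ∑ i, l i = ∑ j, a j := by
  choose l hl_gap hl_zero using exists_mem_poleGap_secularFunction_eq_zero ha hw
  have interlace (i : Fin n) : a i < l i.castSucc ∧ l i.succ < a i :=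
    ⟨poleGap_castSucc_subset_Ioi i (hl_gap _), poleGap_succ_subset_Iio i (hl_gap _)⟩
  have hl : StrictAnti l :=
    Fin.strictAnti_iff_succ_lt.2 fun i => (interlace i).2.trans (interlace i).1
  have hpole (i : Fin (n + 1)) (j : Fin n) : l i ≠ a j := fun h =>
    pole_notMem_poleGap i j (h ▸ hl_gap i)
  have hP := monic_secularPolynomial a w
  have hdeg : (secularPolynomial a w).natDegree = Fintype.card (Fin (n + 1)) := by
    simp [natDegree_secularPolynomial]
  have hroots : (secularPolynomial a w).roots = univ.val.map l :=
    roots_eq_map_of_injective hP.ne_zero hdeg.le hl.injective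
      fun i => (isRoot_secularPolynomial_iff a w (hpole i)).2 (hl_zero i)
  refine ⟨l, hl, interlace, fun i => ⟨hpole i, hl_zero i⟩, fun x hx hx0 => ?_, ?_⟩
  · have hmem := (mem_roots hP.ne_zero).2 ((isRoot_secularPolynomial_iff a w hx).2 hx0)
    rw [hroots] at hmem
    obtain ⟨i, -, rfl⟩ := Multiset.mem_map.1 hmem
    exact ⟨i, rfl⟩
  · have hsum := hP.nextCoeff_eq_neg_sum_of_roots_eq hdeg hroots
    rw [nextCoeff_secularPolynomial] at hsum
    linarith
end

section
/- If Z ~ Beta(a+b, c) and W ~ Beta(a, b) are independent, then the product ZW has distribution Beta(a, b+c). -/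
open MeasureTheory
open intervalIntegral
open scoped Classical

/-- The beta distribution on `[0,1]` with parameters `a`, `b`: the measure with
density `Γ(a+b)/(Γ(a)Γ(b)) · x^(a-1) (1-x)^(b-1)` on `(0,1)` w.r.t. Lebesgue. -/
noncomputable def betaMeasure (a b : ℝ) : Measure ℝ :=
  volume.withDensity fun x => ENNReal.ofReal
    (if 0 < x ∧ x < 1 then
      Real.Gamma (a + b) / (Real.Gamma a * Real.Gamma b) * x ^ (a - 1) * (1 - x) ^ (b - 1)
    else 0)

lemma realBetaIntegrable {u v : ℝ} (hu : 0 < u) (hv : 0 < v) :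
    IntervalIntegrable (fun t : ℝ => t ^ (u - 1) * (1 - t) ^ (v - 1)) volume 0 1 := by
  have h := Complex.betaIntegral_convergent (u := (u:ℂ)) (v := (v:ℂ)) (by simpa) (by simpa)
  have h2 : IntervalIntegrable (fun t : ℝ => ‖(t:ℂ) ^ ((u:ℂ) - 1) * (1 - (t:ℂ)) ^ ((v:ℂ) - 1)‖) volume 0 1 := h.norm
  refine h2.congr ?_
  intro t ht
  dsimp only
  rw [Set.uIoc_of_le (by norm_num : (0:ℝ) ≤ 1)] at ht
  have h0 : (0:ℝ) ≤ t := ht.1.le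
  have h1 : (0:ℝ) ≤ 1 - t := by linarith [ht.2]
  rw [norm_mul]
  rw [show ((t:ℂ)) = ((t:ℝ):ℂ) from rfl]
  rw [show (1 - (t:ℂ)) = (((1-t):ℝ):ℂ) by push_cast; ring]
  rw [show ((u:ℂ) - 1) = (((u-1):ℝ):ℂ) by push_cast; ring]
  rw [show ((v:ℂ) - 1) = (((v-1):ℝ):ℂ) by push_cast; ring]
  rw [← Complex.ofReal_cpow h0, ← Complex.ofReal_cpow h1]
  simp [abs_of_nonneg (Real.rpow_nonneg h0 _), abs_of_nonneg (Real.rpow_nonneg h1 _)]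

lemma realBeta {u v : ℝ} (hu : 0 < u) (hv : 0 < v) :
    ∫ t in (0:ℝ)..1, t ^ (u - 1) * (1 - t) ^ (v - 1) =
      Real.Gamma u * Real.Gamma v / Real.Gamma (u + v) := by
  have key : Complex.betaIntegral u v =
      ((∫ t in (0:ℝ)..1, t ^ (u - 1) * (1 - t) ^ (v - 1) : ℝ) : ℂ) := by
    rw [Complex.betaIntegral, ← intervalIntegral.integral_ofReal]
    refine intervalIntegral.integral_congr_ae ?_
    filter_upwards with t ht
    rw [Set.uIoc_of_le (by norm_num : (0:ℝ) ≤ 1)] at ht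
    have h0 : (0:ℝ) ≤ t := ht.1.le
    have h1 : (0:ℝ) ≤ 1 - t := by linarith [ht.2]
    rw [Complex.ofReal_mul, Complex.ofReal_cpow h0, Complex.ofReal_cpow h1]
    rw [show ((u:ℂ) - 1) = (((u-1):ℝ):ℂ) by push_cast; ring,
      show ((v:ℂ) - 1) = (((v-1):ℝ):ℂ) by push_cast; ring,
      show (1 - (t:ℂ)) = (((1-t):ℝ):ℂ) by push_cast; ring]
  have h := Complex.Gamma_mul_Gamma_eq_betaIntegral (s := (u:ℂ)) (t := (v:ℂ)) (by simpa) (by simpa)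
  rw [key] at h
  rw [show ((u:ℂ) + v) = ((u+v : ℝ) : ℂ) by push_cast; ring] at h
  rw [Complex.Gamma_ofReal, Complex.Gamma_ofReal, Complex.Gamma_ofReal] at h
  have h' : Real.Gamma u * Real.Gamma v =
      Real.Gamma (u+v) * ∫ t in (0:ℝ)..1, t ^ (u - 1) * (1 - t) ^ (v - 1) := by
    exact_mod_cast h
  have hG : Real.Gamma (u+v) ≠ 0 := (Real.Gamma_pos_of_pos (by linarith)).ne'
  field_simp [hG] at h' ⊢
  linarith [h']

lemma shiftedIntegrable {b c x : ℝ} (hb : 0 < b) (hc : 0 < c) (hx0 : 0 < x) (hx1 : x < 1) :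
    IntervalIntegrable (fun z : ℝ => (z - x) ^ (b - 1) * (1 - z) ^ (c - 1)) volume x 1 := by
  have hx : (0:ℝ) < 1 - x := by linarith
  have h0 := (realBetaIntegrable hb hc).comp_mul_right (c := (1 - x)⁻¹)
  have h1 := (h0.comp_sub_right x).const_mul ((1 - x) ^ (b - 1) * (1 - x) ^ (c - 1))
  rw [show (0:ℝ)/(1-x)⁻¹ + x = x by field_simp; ring, show (1:ℝ)/(1-x)⁻¹ + x = 1 by field_simp; ring] at h1
  rw [intervalIntegrable_iff] at h1 ⊢
  have he : Set.uIoc x 1 = Set.Ioc x 1 := Set.uIoc_of_le (by linarith)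
  rw [he] at h1 ⊢
  refine (h1.congr_fun ?_ measurableSet_Ioc)
  intro z hz
  dsimp only
  have hzx : (0:ℝ) ≤ z - x := by linarith [hz.1]
  have hz1 : (0:ℝ) ≤ 1 - z := by linarith [hz.2]
  have e1 : (z - x) * (1 - x)⁻¹ = (z - x) / (1 - x) := by ring
  rw [e1, Real.div_rpow hzx hx.le]
  have e2 : 1 - (z - x) / (1 - x) = (1 - z) / (1 - x) := by field_simp; ring
  rw [e2, Real.div_rpow hz1 hx.le]
  field_simp

lemma shiftedBeta {b c x : ℝ} (hb : 0 < b) (hc : 0 < c) (hx0 : 0 < x) (hx1 : x < 1) :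
    ∫ z in x..(1:ℝ), (z - x) ^ (b - 1) * (1 - z) ^ (c - 1) =
      (1 - x) ^ (b + c - 1) * (Real.Gamma b * Real.Gamma c / Real.Gamma (b + c)) := by
  have hx : (0:ℝ) < 1 - x := by linarith
  have h := intervalIntegral.integral_comp_mul_add
    (f := fun z : ℝ => (z - x) ^ (b - 1) * (1 - z) ^ (c - 1)) (a := 0) (b := 1)
    (c := 1 - x) hx.ne' x
  simp only [mul_zero, zero_add, mul_one, smul_eq_mul] at h
  have h2 : (1 - x) + x = 1 := by ring
  rw [h2] at h
  have key : ∫ t in (0:ℝ)..1, ((1 - x) * t + x - x) ^ (b - 1) * (1 - ((1 - x) * t + x)) ^ (c - 1)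
      = ((1 - x) ^ (b - 1) * (1 - x) ^ (c - 1)) *
        ∫ t in (0:ℝ)..1, t ^ (b - 1) * (1 - t) ^ (c - 1) := by
    rw [← intervalIntegral.integral_const_mul]
    refine intervalIntegral.integral_congr_ae ?_
    filter_upwards with t ht
    rw [Set.uIoc_of_le (by norm_num : (0:ℝ) ≤ 1)] at ht
    have ht0 : (0:ℝ) ≤ t := ht.1.le
    have ht1 : (0:ℝ) ≤ 1 - t := by linarith [ht.2]
    have e1 : (1 - x) * t + x - x = (1 - x) * t := by ring
    have e2 : 1 - ((1 - x) * t + x) = (1 - x) * (1 - t) := by ring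
    rw [e1, e2, Real.mul_rpow hx.le ht0, Real.mul_rpow hx.le ht1]
    ring
  rw [key, realBeta hb hc] at h
  have h3 : (∫ z in x..(1:ℝ), (z - x) ^ (b - 1) * (1 - z) ^ (c - 1))
      = (1 - x) * ((1 - x) ^ (b - 1) * (1 - x) ^ (c - 1) *
        (Real.Gamma b * Real.Gamma c / Real.Gamma (b + c))) := by
    rw [h]
    field_simp
  rw [h3]
  have e : (1 - x) * ((1 - x) ^ (b - 1) * (1 - x) ^ (c - 1)) = (1 - x) ^ (b + c - 1) := by
    rw [show b + c - 1 = 1 + ((b-1) + (c-1)) by ring, Real.rpow_add hx, Real.rpow_add hx,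
      Real.rpow_one]
  rw [← e]
  ring

noncomputable def betaPdf (u v : ℝ) (x : ℝ) : ℝ :=
  if 0 < x ∧ x < 1 then
    Real.Gamma (u + v) / (Real.Gamma u * Real.Gamma v) * x ^ (u - 1) * (1 - x) ^ (v - 1)
  else 0

lemma keyDensity {a b c : ℝ} (ha : 0 < a) (hb : 0 < b) (hc : 0 < c) (x : ℝ) :
    ∫⁻ z, ENNReal.ofReal (betaPdf (a + b) c z) * ENNReal.ofReal z⁻¹ *
      ENNReal.ofReal (betaPdf a b (x / z)) = ENNReal.ofReal (betaPdf a (b + c) x) := by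
  have hGa := Real.Gamma_pos_of_pos ha
  have hGb := Real.Gamma_pos_of_pos hb
  have hGc := Real.Gamma_pos_of_pos hc
  have hGab := Real.Gamma_pos_of_pos (add_pos ha hb)
  have hGbc := Real.Gamma_pos_of_pos (add_pos hb hc)
  have hGabc : 0 < Real.Gamma (a + b + c) := Real.Gamma_pos_of_pos (by linarith)
  set C1 : ℝ := Real.Gamma (a + b + c) / (Real.Gamma (a + b) * Real.Gamma c) with hC1
  set C2 : ℝ := Real.Gamma (a + b) / (Real.Gamma a * Real.Gamma b) with hC2
  by_cases hx : 0 < x ∧ x < 1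
  · obtain ⟨hx0, hx1⟩ := hx
    set K : ℝ := C1 * C2 * x ^ (a - 1) with hK
    have hKnn : 0 ≤ K := by
      have : 0 ≤ C1 := by positivity
      have : 0 ≤ C2 := by positivity
      positivity
    have hstep : (fun z => ENNReal.ofReal (betaPdf (a + b) c z) * ENNReal.ofReal z⁻¹ *
        ENNReal.ofReal (betaPdf a b (x / z))) =
        (Set.Ioo x 1).indicator
          (fun z => ENNReal.ofReal (K * ((z - x) ^ (b - 1) * (1 - z) ^ (c - 1)))) := by
      funext z
      by_cases hz : z ∈ Set.Ioo x 1
      · obtain ⟨hzx, hz1⟩ := hz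
        have hz0 : 0 < z := lt_trans hx0 hzx
        have hmem : z ∈ Set.Ioo x 1 := ⟨hzx, hz1⟩
        rw [Set.indicator_of_mem hmem]
        rw [betaPdf, if_pos ⟨hz0, hz1⟩, betaPdf,
          if_pos ⟨div_pos hx0 hz0, (div_lt_one hz0).2 hzx⟩]
        have w1 : (0:ℝ) ≤ Real.Gamma (a + b + c) / (Real.Gamma (a + b) * Real.Gamma c) *
            z ^ (a + b - 1) * (1 - z) ^ (c - 1) :=
          mul_nonneg (mul_nonneg (div_nonneg hGabc.le (mul_nonneg hGab.le hGc.le))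
            (Real.rpow_nonneg hz0.le _)) (Real.rpow_nonneg (by linarith) _)
        rw [← ENNReal.ofReal_mul w1,
          ← ENNReal.ofReal_mul (mul_nonneg w1 (inv_nonneg.2 hz0.le))]
        congr 1
        rw [Real.div_rpow hx0.le hz0.le]
        have e2 : 1 - x / z = (z - x) / z := by field_simp
        rw [e2, Real.div_rpow (by linarith) hz0.le]
        rw [show a + b + c = (a + b) + c by ring]
        rw [show a + b - 1 = (a - 1) + ((b - 1) + 1) by ring, Real.rpow_add hz0,
          Real.rpow_add hz0, Real.rpow_one]
        have hza : z ^ (a - 1) ≠ 0 := (Real.rpow_pos_of_pos hz0 _).ne'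
        have hzb : z ^ (b - 1) ≠ 0 := (Real.rpow_pos_of_pos hz0 _).ne'
        rw [← hC1, ← hC2, hK]
        field_simp
      · rw [Set.indicator_of_notMem hz]
        rw [Set.mem_Ioo, not_and_or] at hz
        by_cases hz' : 0 < z ∧ z < 1
        · have hzx : ¬ (x / z < 1) := by
            push_neg
            rw [le_div_iff₀ hz'.1]
            rcases hz with h | h
            · push_neg at h; linarith
            · push_neg at h; linarith [hz'.2]
          have h3 : betaPdf a b (x / z) = 0 := by
            rw [betaPdf, if_neg (fun hh => hzx hh.2)]
          rw [h3]
          simp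
        · rw [betaPdf, if_neg hz']
          simp
    rw [hstep, lintegral_indicator measurableSet_Ioo]
    have hint : IntegrableOn (fun z : ℝ => K * ((z - x) ^ (b - 1) * (1 - z) ^ (c - 1)))
        (Set.Ioo x 1) volume := by
      have h1 := (shiftedIntegrable hb hc hx0 hx1).const_mul K
      rw [intervalIntegrable_iff, Set.uIoc_of_le hx1.le] at h1
      exact h1.mono_set Set.Ioo_subset_Ioc_self
    have hnn : 0 ≤ᵐ[volume.restrict (Set.Ioo x 1)]
        fun z : ℝ => K * ((z - x) ^ (b - 1) * (1 - z) ^ (c - 1)) := by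
      rw [Filter.EventuallyLE, ae_restrict_iff' measurableSet_Ioo]
      filter_upwards with z hz
      have h1 : (0:ℝ) ≤ z - x := by linarith [hz.1]
      have h2 : (0:ℝ) ≤ 1 - z := by linarith [hz.2]
      positivity
    rw [← ofReal_integral_eq_lintegral_ofReal hint hnn]
    congr 1
    rw [← integral_Ioc_eq_integral_Ioo, ← intervalIntegral.integral_of_le hx1.le,
      intervalIntegral.integral_const_mul, shiftedBeta hb hc hx0 hx1]
    rw [betaPdf, if_pos ⟨hx0, hx1⟩, hK, hC1, hC2]
    field_simp
    ring
  · have hzero : (fun z => ENNReal.ofReal (betaPdf (a + b) c z) * ENNReal.ofReal z⁻¹ *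
        ENNReal.ofReal (betaPdf a b (x / z))) = fun _ => 0 := by
      funext z
      by_cases hz : 0 < z ∧ z < 1
      · have : betaPdf a b (x / z) = 0 := by
          rw [betaPdf, if_neg]
          rintro ⟨h1, h2⟩
          rw [not_and_or] at hx
          push_neg at hx
          rcases hx with h | h
          · have : x / z ≤ 0 := div_nonpos_of_nonpos_of_nonneg h hz.1.le
            linarith
          · have : 1 ≤ x / z := by
              rw [le_div_iff₀ hz.1]
              linarith [hz.2]
            linarith
        rw [this]
        simp
      · rw [betaPdf, if_neg hz]
        simp
    rw [hzero, lintegral_zero, betaPdf, if_neg hx]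
    simp

lemma betaMeasure_eq (u v : ℝ) :
    betaMeasure u v = volume.withDensity fun x => ENNReal.ofReal (betaPdf u v x) := rfl

lemma betaPdf_mble (u v : ℝ) : Measurable fun x => ENNReal.ofReal (betaPdf u v x) := by
  apply Measurable.ennreal_ofReal
  unfold betaPdf
  apply Measurable.ite
  · exact measurableSet_Ioo (a := (0:ℝ)) (b := 1)
  · fun_prop
  · exact measurable_const

lemma betaMeasure_Ioo_pos {u v : ℝ} (hu : 0 < u) (hv : 0 < v) :
    0 < betaMeasure u v (Set.Ioo 0 1) := by
  rw [betaMeasure_eq, withDensity_apply _ measurableSet_Ioo]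
  rw [lintegral_pos_iff_support (betaPdf_mble u v)]
  have hsub : Set.Ioo (0:ℝ) 1 ⊆ Function.support fun x => ENNReal.ofReal (betaPdf u v x) := by
    intro x hx
    have hpos : 0 < betaPdf u v x := by
      rw [betaPdf, if_pos ⟨hx.1, hx.2⟩]
      have := Real.Gamma_pos_of_pos hu
      have := Real.Gamma_pos_of_pos hv
      have := Real.Gamma_pos_of_pos (add_pos hu hv)
      have h1 : (0:ℝ) < x := hx.1
      have h2 : (0:ℝ) < 1 - x := by linarith [hx.2]
      positivity
    exact Function.mem_support.2 (ENNReal.ofReal_pos.2 hpos).ne'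
  calc (0:ENNReal) < volume.restrict (Set.Ioo 0 1) (Set.Ioo 0 1) := by
        rw [Measure.restrict_apply' measurableSet_Ioo]
        simp
      _ ≤ _ := measure_mono hsub

lemma betaProd {a b c : ℝ} (ha : 0 < a) (hb : 0 < b) (hc : 0 < c) :
    Measure.map (fun p : ℝ × ℝ => p.1 * p.2)
      ((betaMeasure (a + b) c).prod (betaMeasure a b)) = betaMeasure a (b + c) := by
  have hm : Measurable fun p : ℝ × ℝ => p.1 * p.2 := measurable_fst.mul measurable_snd
  ext s hs
  rw [Measure.map_apply hm hs]
  rw [betaMeasure_eq (a+b) c, betaMeasure_eq a b, betaMeasure_eq a (b+c)]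
  rw [Measure.prod_apply (hm hs)]
  rw [lintegral_withDensity_eq_lintegral_mul _ (betaPdf_mble (a+b) c)
    (measurable_measure_prodMk_left (hm hs))]
  -- pointwise rewrite of the integrand
  have claim : ∀ z : ℝ,
      ((fun z => ENNReal.ofReal (betaPdf (a+b) c z)) * fun z =>
        (volume.withDensity fun x => ENNReal.ofReal (betaPdf a b x))
          (Prod.mk z ⁻¹' ((fun p : ℝ × ℝ => p.1 * p.2) ⁻¹' s))) z
      = ∫⁻ x, s.indicator (fun x => ENNReal.ofReal (betaPdf (a+b) c z) *
          ENNReal.ofReal z⁻¹ * ENNReal.ofReal (betaPdf a b (x / z))) x ∂volume := by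
    intro z
    simp only [Pi.mul_apply]
    by_cases hz : 0 < z ∧ z < 1
    · have hz0 : (0:ℝ) < z := hz.1
      have htm : MeasurableSet (Prod.mk z ⁻¹' ((fun p : ℝ × ℝ => p.1 * p.2) ⁻¹' s)) :=
        measurable_prodMk_left (hm hs)
      have hH : Measurable fun x : ℝ =>
          s.indicator (fun x => ENNReal.ofReal (betaPdf a b (x / z))) x := by
        apply Measurable.indicator _ hs
        exact (betaPdf_mble a b).comp (measurable_id.div_const z)
      have hset : ∀ w : ℝ, s.indicator (fun x => ENNReal.ofReal (betaPdf a b (x / z))) (z * w)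
          = (Prod.mk z ⁻¹' ((fun p : ℝ × ℝ => p.1 * p.2) ⁻¹' s)).indicator
              (fun x => ENNReal.ofReal (betaPdf a b x)) w := by
        intro w
        by_cases hw : z * w ∈ s
        · rw [Set.indicator_of_mem hw, Set.indicator_of_mem (by simpa using hw)]
          rw [mul_div_cancel_left₀ _ hz0.ne']
        · rw [Set.indicator_of_notMem hw, Set.indicator_of_notMem (by simpa using hw)]
      have hWD : (volume.withDensity fun x => ENNReal.ofReal (betaPdf a b x))
            (Prod.mk z ⁻¹' ((fun p : ℝ × ℝ => p.1 * p.2) ⁻¹' s))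
          = ENNReal.ofReal z⁻¹ *
            ∫⁻ x, s.indicator (fun x => ENNReal.ofReal (betaPdf a b (x / z))) x ∂volume := by
        rw [withDensity_apply _ htm, ← lintegral_indicator htm]
        have : ∀ w : ℝ, (Prod.mk z ⁻¹' ((fun p : ℝ × ℝ => p.1 * p.2) ⁻¹' s)).indicator
            (fun x => ENNReal.ofReal (betaPdf a b x)) w
            = (fun x => s.indicator (fun x => ENNReal.ofReal (betaPdf a b (x / z))) x) (z * w) :=
          fun w => (hset w).symm
        rw [lintegral_congr this]
        rw [← lintegral_map hH (measurable_const_mul z)]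
        rw [Real.map_volume_mul_left hz0.ne', lintegral_smul_measure]
        congr 1
        rw [abs_of_pos (inv_pos.2 hz0)]
      rw [hWD, ← mul_assoc, ← lintegral_const_mul _ hH]
      refine lintegral_congr fun x => ?_
      by_cases hxs : x ∈ s
      · simp only [Set.indicator_of_mem hxs, mul_assoc]
      · simp only [Set.indicator_of_notMem hxs, mul_zero]
    · have hf1 : ENNReal.ofReal (betaPdf (a+b) c z) = 0 := by
        rw [betaPdf, if_neg hz]; simp
      rw [hf1, zero_mul]
      symm
      simp only [hf1, zero_mul]
      simp [Set.indicator_apply]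
  rw [lintegral_congr claim]
  have hGm : AEMeasurable (Function.uncurry fun z x =>
      s.indicator (fun x => ENNReal.ofReal (betaPdf (a+b) c z) *
        ENNReal.ofReal z⁻¹ * ENNReal.ofReal (betaPdf a b (x / z))) x)
      (volume.prod volume) := by
    apply Measurable.aemeasurable
    have : (Function.uncurry fun z x =>
        s.indicator (fun x => ENNReal.ofReal (betaPdf (a+b) c z) *
          ENNReal.ofReal z⁻¹ * ENNReal.ofReal (betaPdf a b (x / z))) x)
        = fun p : ℝ × ℝ => if p.2 ∈ s then ENNReal.ofReal (betaPdf (a+b) c p.1) *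
          ENNReal.ofReal p.1⁻¹ * ENNReal.ofReal (betaPdf a b (p.2 / p.1)) else 0 := by
      funext p
      rw [Function.uncurry]
      rw [Set.indicator_apply]
    rw [this]
    apply Measurable.ite (measurable_snd hs)
    · exact (((betaPdf_mble (a+b) c).comp measurable_fst).mul
        (measurable_fst.inv.ennreal_ofReal)).mul
        ((betaPdf_mble a b).comp (measurable_snd.div measurable_fst))
    · exact measurable_const
  rw [lintegral_lintegral_swap hGm]
  have inner : ∀ x : ℝ, (∫⁻ z, s.indicator (fun x => ENNReal.ofReal (betaPdf (a+b) c z) *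
      ENNReal.ofReal z⁻¹ * ENNReal.ofReal (betaPdf a b (x / z))) x ∂volume)
      = s.indicator (fun x => ENNReal.ofReal (betaPdf a (b+c) x)) x := by
    intro x
    by_cases hxs : x ∈ s
    · simp only [Set.indicator_of_mem hxs]
      exact keyDensity ha hb hc x
    · simp only [Set.indicator_of_notMem hxs, lintegral_zero]
  rw [lintegral_congr inner]
  rw [withDensity_apply _ hs, ← lintegral_indicator hs]

/-- If `Z ~ Beta(a+b, c)` and `W ~ Beta(a, b)` are independent, then the product
`Z·W` has distribution `Beta(a, b+c)`. -/
theorem stmt7 {Ω : Type*} [MeasurableSpace Ω] (μ : Measure Ω) [IsProbabilityMeasure μ]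
    (a b c : ℝ) (ha : 0 < a) (hb : 0 < b) (hc : 0 < c)
    (Z W : Ω → ℝ)
    (hZ : Measure.map Z μ = betaMeasure (a + b) c)
    (hW : Measure.map W μ = betaMeasure a b)
    (hind : ProbabilityTheory.IndepFun Z W μ) :
    Measure.map (fun ω => Z ω * W ω) μ = betaMeasure a (b + c) := by
  have hZm : AEMeasurable Z μ := by
    by_contra h
    rw [Measure.map_of_not_aemeasurable h] at hZ
    have hpos := betaMeasure_Ioo_pos (add_pos ha hb) hc
    rw [← hZ] at hpos
    simp at hpos
  have hWm : AEMeasurable W μ := by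
    by_contra h
    rw [Measure.map_of_not_aemeasurable h] at hW
    have hpos := betaMeasure_Ioo_pos ha hb
    rw [← hW] at hpos
    simp at hpos
  have hprod := (ProbabilityTheory.indepFun_iff_map_prod_eq_prod_map_map hZm hWm).1 hind
  have hcomp : Measure.map (fun ω => Z ω * W ω) μ
      = Measure.map (fun p : ℝ × ℝ => p.1 * p.2) (Measure.map (fun ω => (Z ω, W ω)) μ) :=
    (AEMeasurable.map_map_of_aemeasurable
      ((measurable_fst.mul measurable_snd).aemeasurable) (hZm.prodMk hWm)).symm
  rw [hcomp, hprod, hZ, hW, betaProd ha hb hc]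
end
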